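/- arXiv:1501.00109 — 2 statements merged into one kernel-verified Lean document; each statement's English description precedes it below -/
import Mathlib

section
/- For every E₀>0 and m>0 there exists δ>0 with the following property: for every b>0, every measurable function ρ:B_b→[0,∞) such that G∘ρ is integrable with ∫_{B_b} G(ρ(x)) dx ≤ E₀, and every r∈(0,b] with ∫_{B_r} ρ(x) dx ≥ m, one has r ≥ δ. -/
open MeasureTheory Set Metric

noncomputable section

/-- `G(s) = s log s − s + 1` (with the convention `G(0) = 1`, which holds literally in
Lean since `Real.log 0 = 0`). -/
def Gfun (s : ℝ) : ℝ := s * Real.log s - s + 1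

/-! The convex conjugate of `G` is `t ↦ eᵗ - 1`, so Young's inequality `s t ≤ G(s) + eᵗ - 1`
integrated over `B_r` gives `t m ≤ E₀ + (eᵗ - 1) |B_r|` for every `t`. Taking `t = 2 E₀ / m`
yields `|B_r| ≥ E₀ / (eᵗ - 1)`, a lower bound on `r` that depends neither on `b` nor on `ρ`. -/

open InformationTheory Real

lemma Gfun_eq_klFun : Gfun = klFun := by
  ext s
  rw [Gfun, klFun_apply]
  ring

lemma Gfun_nonneg {s : ℝ} (hs : 0 ≤ s) : 0 ≤ Gfun s :=
  Gfun_eq_klFun ▸ klFun_nonneg hs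

lemma mul_le_Gfun_add_exp_sub_one {s : ℝ} (hs : 0 ≤ s) (t : ℝ) :
    s * t ≤ Gfun s + (exp t - 1) := by
  rcases hs.eq_or_lt with rfl | hs
  · simp [Gfun, (exp_pos t).le]
  · have htangent : s * (t - log s + 1) ≤ exp t := by
      have := add_one_le_exp (t - log s)
      rwa [exp_sub, exp_log hs, le_div_iff₀' hs] at this
    rw [Gfun]
    linarith

section FiniteMeasure

variable {α : Type*} [MeasurableSpace α] {μ : Measure α} [IsFiniteMeasure μ] {ρ : α → ℝ}

lemma integrable_of_integrable_Gfun (hρm : AEStronglyMeasurable ρ μ) (hρ : 0 ≤ᵐ[μ] ρ)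
    (hG : Integrable (fun x => Gfun (ρ x)) μ) : Integrable ρ μ := by
  refine (hG.add (integrable_const (exp 1 - 1))).mono' hρm ?_
  filter_upwards [hρ] with x hx
  rw [Real.norm_eq_abs, abs_of_nonneg hx]
  simpa using mul_le_Gfun_add_exp_sub_one hx 1

lemma mul_integral_le_integral_Gfun_add (hρm : AEStronglyMeasurable ρ μ) (hρ : 0 ≤ᵐ[μ] ρ)
    (hG : Integrable (fun x => Gfun (ρ x)) μ) (t : ℝ) :
    t * ∫ x, ρ x ∂μ ≤ ∫ x, Gfun (ρ x) ∂μ + (exp t - 1) * μ.real univ := by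
  have hconst : Integrable (fun _ => exp t - 1) μ := integrable_const _
  calc t * ∫ x, ρ x ∂μ = ∫ x, ρ x * t ∂μ := by rw [integral_mul_const, mul_comm]
    _ ≤ ∫ x, (Gfun (ρ x) + (exp t - 1)) ∂μ := by
      refine integral_mono_ae ((integrable_of_integrable_Gfun hρm hρ hG).mul_const t)
        (hG.add hconst) ?_
      filter_upwards [hρ] with x hx using mul_le_Gfun_add_exp_sub_one hx t
    _ = ∫ x, Gfun (ρ x) ∂μ + (exp t - 1) * μ.real univ := by
      rw [integral_add hG hconst, integral_const, smul_eq_mul, mul_comm]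

end FiniteMeasure

lemma measureReal_ball_fin_three (x : EuclideanSpace ℝ (Fin 3)) {r : ℝ} (hr : 0 ≤ r) :
    volume.real (ball x r) = r ^ 3 * (π * 4 / 3) := by
  rw [measureReal_def, EuclideanSpace.volume_ball_fin_three, ENNReal.toReal_mul,
    ENNReal.toReal_pow, ENNReal.toReal_ofReal hr, ENNReal.toReal_ofReal (by positivity)]

/-- for every `E₀ > 0` and `m > 0` there exists `δ > 0` such that for every
`b > 0`, every measurable nonnegative `ρ : B_b → [0,∞)` with `∫_{B_b} G(ρ) ≤ E₀`, and
every `r ∈ (0,b]` with `∫_{B_r} ρ ≥ m`, one has `r ≥ δ`. -/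
theorem radius_lower_bound_from_entropy (E₀ m : ℝ) (hE₀ : 0 < E₀) (hm : 0 < m) :
    ∃ δ > 0, ∀ (b : ℝ), 0 < b →
      ∀ ρ : EuclideanSpace ℝ (Fin 3) → ℝ, Measurable ρ → (∀ x, 0 ≤ ρ x) →
        IntegrableOn (fun x => Gfun (ρ x)) (ball (0 : EuclideanSpace ℝ (Fin 3)) b) volume →
        (∫ x in ball (0 : EuclideanSpace ℝ (Fin 3)) b, Gfun (ρ x)) ≤ E₀ →
        ∀ r : ℝ, 0 < r → r ≤ b →
          m ≤ (∫ x in ball (0 : EuclideanSpace ℝ (Fin 3)) r, ρ x) →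
          δ ≤ r := by
  set t := 2 * E₀ / m
  have ht : 0 < t := by positivity
  have hc : 0 < exp t - 1 := by linarith [add_one_le_exp t]
  refine ⟨(E₀ / (exp t - 1) / (π * 4 / 3)) ^ (3 : ℝ)⁻¹, by positivity, ?_⟩
  intro b _ ρ hρm hρ hG hGb r hr hrb hmr
  have hsub : ball (0 : EuclideanSpace ℝ (Fin 3)) r ⊆ ball 0 b := ball_subset_ball hrb
  have : IsFiniteMeasure (volume.restrict (ball (0 : EuclideanSpace ℝ (Fin 3)) r)) :=
    isFiniteMeasure_restrict.2 measure_ball_lt_top.ne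
  have hGr : ∫ x in ball (0 : EuclideanSpace ℝ (Fin 3)) r, Gfun (ρ x) ≤ E₀ :=
    (setIntegral_mono_set hG (ae_of_all _ fun x => Gfun_nonneg (hρ x))
      hsub.eventuallyLE).trans hGb
  have hyoung := mul_integral_le_integral_Gfun_add hρm.aestronglyMeasurable
    (ae_of_all _ hρ) (hG.mono_set hsub) t
  rw [measureReal_restrict_apply_univ, measureReal_ball_fin_three 0 hr.le] at hyoung
  have htm : t * m = 2 * E₀ := div_mul_cancel₀ _ hm.ne'
  have hvol : E₀ ≤ (exp t - 1) * (r ^ 3 * (π * 4 / 3)) := by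
    linarith [mul_le_mul_of_nonneg_left hmr ht.le]
  rw [rpow_inv_le_iff_of_pos (by positivity) hr.le three_pos, rpow_ofNat,
    div_le_iff₀ (by positivity), div_le_iff₀' hc]
  exact hvol
end
end

section
/- Let a<b' be real numbers and let θ:[a,b']→ℝ be continuously differentiable with θ(s)>0 for all s∈[a,b']. Then for every h∈[a,b']: θ(h) ≤ 2(b'−a)⁻¹ ∫_a^{b'} θ(s) ds + (1/2)(∫_a^{b'} θ(s) ds)(∫_a^{b'} θ'(s)²/θ(s)² ds). -/
open MeasureTheory Set intervalIntegral

/-!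
Let `s₀` minimise `θ` on `[a, b']`, so that `θ s₀` is at most the mean of `θ`. By the fundamental
theorem of calculus `√θ h - √θ s₀ = ∫_{s₀}^h θ' / (2√θ)`, and the total variation
`F = ∫_a^{b'} |θ'| / (2√θ)` of `√θ` satisfies `F² ≤ (∫ θ) (∫ θ'²/θ²) / 4`: this is Cauchy–Schwarz,
obtained here by integrating the pointwise AM-GM bound `|θ'| / (2√θ) ≤ l θ'²/(8θ²) + θ/(2l)` and
optimising over `l > 0`. Finally `θ h = (√θ s₀ + (√θ h - √θ s₀))² ≤ 2 θ s₀ + 2 F²`.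
-/

theorem Real.abs_div_two_sqrt_le {t l : ℝ} (x : ℝ) (ht : 0 < t) (hl : 0 < l) :
    |x / (2 * √t)| ≤ l * (x ^ 2 / t ^ 2 / 8) + t / 2 / l := by
  obtain ⟨u, hu, rfl⟩ : ∃ u, 0 < u ∧ t = u ^ 2 :=
    ⟨√t, Real.sqrt_pos.2 ht, (Real.sq_sqrt ht.le).symm⟩
  rw [Real.sqrt_sq hu.le, abs_div, abs_of_pos (by positivity : 0 < 2 * u)]
  -- AM-GM: the two summands have product `(|x| / (4 u))²`
  have key : l * (x ^ 2 / (u ^ 2) ^ 2 / 8) + u ^ 2 / 2 / l - |x| / (2 * u)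
      = (l * |x| - 2 * u ^ 3) ^ 2 / (8 * l * u ^ 4) := by
    field_simp; ring_nf; rw [sq_abs]
  nlinarith [show 0 ≤ (l * |x| - 2 * u ^ 3) ^ 2 / (8 * l * u ^ 4) by positivity]

theorem sq_le_four_mul_mul_of_forall_le_mul_add_div {A B D : ℝ} (hA : 0 ≤ A) (hB : 0 < B)
    (hD : 0 ≤ D) (h : ∀ l > 0, D ≤ l * A + B / l) : D ^ 2 ≤ 4 * A * B := by
  rcases hD.eq_or_lt with rfl | hD
  · rw [zero_pow two_ne_zero]; positivity
  have h_opt : D / 2 ≤ 2 * A * B / D := by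
    have := h (2 * B / D) (by positivity)
    field_simp at this ⊢
    linarith
  rw [le_div_iff₀ hD] at h_opt
  linarith

theorem abs_intervalIntegral_le_integral_abs_of_mem_Icc {f : ℝ → ℝ} {a b c d : ℝ}
    (hf : IntervalIntegrable f volume a b) (hc : c ∈ Icc a b) (hd : d ∈ Icc a b) :
    |∫ x in c..d, f x| ≤ ∫ x in a..b, |f x| := by
  have hab : a ≤ b := hc.1.trans hc.2
  calc |∫ x in c..d, f x| ≤ ∫ x in uIoc c d, |f x| := by
        simpa only [Real.norm_eq_abs] using
          norm_integral_le_integral_norm_uIoc (f := f) (a := c) (b := d)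
    _ ≤ ∫ x in Ioc a b, |f x| :=
      setIntegral_mono_set (hf.1.norm) (ae_of_all _ fun _ => abs_nonneg _)
        (Ioc_subset_Ioc (le_min hc.1 hd.1) (max_le hc.2 hd.2)).eventuallyLE
    _ = ∫ x in a..b, |f x| := (integral_of_le hab).symm

theorem integral_eq_sub_of_hasDerivWithinAt_Icc {f f' : ℝ → ℝ} {a b c d : ℝ}
    (hderiv : ∀ x ∈ Icc a b, HasDerivWithinAt f (f' x) (Icc a b) x)
    (hf' : ContinuousOn f' (Icc a b)) (hc : c ∈ Icc a b) (hd : d ∈ Icc a b) :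
    ∫ x in c..d, f' x = f d - f c := by
  have hsub : uIcc c d ⊆ Icc a b := uIcc_subset_Icc hc hd
  refine integral_eq_sub_of_hasDeriv_right
    (fun x hx => (hderiv x (hsub hx)).continuousWithinAt.mono hsub) (fun x hx => ?_)
    ((hf'.mono hsub).intervalIntegrable)
  have hx' : x ∈ Ioo a b :=
    ⟨(le_min hc.1 hd.1).trans_lt hx.1, hx.2.trans_le (max_le hc.2 hd.2)⟩
  exact ((hderiv x (Ioo_subset_Icc_self hx')).hasDerivAt
    (Icc_mem_nhds hx'.1 hx'.2)).hasDerivWithinAt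

theorem mul_sub_le_integral_of_isMinOn {f : ℝ → ℝ} {a b s : ℝ} (hab : a ≤ b)
    (hf : IntervalIntegrable f volume a b) (hs : IsMinOn f (Icc a b) s) :
    f s * (b - a) ≤ ∫ x in a..b, f x := by
  simpa [mul_comm] using integral_mono_on hab intervalIntegrable_const hf fun x hx => hs hx

theorem ContinuousOn.div_two_sqrt {s : Set ℝ} {θ θ' : ℝ → ℝ} (hθ' : ContinuousOn θ' s)
    (hθ : ContinuousOn θ s) (hpos : ∀ x ∈ s, 0 < θ x) :
    ContinuousOn (fun x => θ' x / (2 * √(θ x))) s :=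
  hθ'.div (continuousOn_const.mul hθ.sqrt) fun x hx => by
    have := Real.sqrt_pos.2 (hpos x hx); positivity

theorem sq_integral_abs_deriv_sqrt_le {a b : ℝ} {θ θ' : ℝ → ℝ} (hab : a < b)
    (hθ : ContinuousOn θ (Icc a b)) (hθ' : ContinuousOn θ' (Icc a b)) (hpos : ∀ s ∈ Icc a b, 0 < θ s) :
    (∫ s in a..b, |θ' s / (2 * √(θ s))|) ^ 2
      ≤ (∫ s in a..b, θ s) * (∫ s in a..b, θ' s ^ 2 / θ s ^ 2) / 4 := by
  have hq : ContinuousOn (fun s => θ' s ^ 2 / θ s ^ 2) (Icc a b) :=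
    (hθ'.pow 2).div (hθ.pow 2) fun s hs => (pow_pos (hpos s hs) 2).ne'
  have hθi := hθ.intervalIntegrable_of_Icc (μ := volume) hab.le
  have hqi := hq.intervalIntegrable_of_Icc (μ := volume) hab.le
  have hI : 0 ≤ ∫ s in a..b, θ' s ^ 2 / θ s ^ 2 := integral_nonneg hab.le fun s _ => by positivity
  have hJ : 0 < ∫ s in a..b, θ s :=
    intervalIntegral_pos_of_pos_on hθi (fun s hs => hpos s (Ioo_subset_Icc_self hs)) hab
  calc (∫ s in a..b, |θ' s / (2 * √(θ s))|) ^ 2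
      ≤ 4 * ((∫ s in a..b, θ' s ^ 2 / θ s ^ 2) / 8) * ((∫ s in a..b, θ s) / 2) := by
        refine sq_le_four_mul_mul_of_forall_le_mul_add_div
          (by positivity) (by positivity)
          (integral_nonneg hab.le fun s _ => abs_nonneg _) fun l hl => ?_
        calc ∫ s in a..b, |θ' s / (2 * √(θ s))|
            ≤ ∫ s in a..b, (l * (θ' s ^ 2 / θ s ^ 2 / 8) + θ s / 2 / l) :=
              integral_mono_on hab.le
                ((hθ'.div_two_sqrt hθ hpos).abs.intervalIntegrable_of_Icc hab.le)
                (((hqi.div_const 8).const_mul l).add (hθi.div_const 2 |>.div_const l))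
                fun s hs => Real.abs_div_two_sqrt_le _ (hpos s hs) hl
          _ = l * ((∫ s in a..b, θ' s ^ 2 / θ s ^ 2) / 8) + (∫ s in a..b, θ s) / 2 / l := by
              rw [integral_add ((hqi.div_const 8).const_mul l) (hθi.div_const 2 |>.div_const l),
                intervalIntegral.integral_const_mul, intervalIntegral.integral_div,
                intervalIntegral.integral_div, intervalIntegral.integral_div]
    _ = (∫ s in a..b, θ s) * (∫ s in a..b, θ' s ^ 2 / θ s ^ 2) / 4 := by ring

/-- if `θ` is continuously differentiable and positive on `[a,b']`, then for
every `h ∈ [a,b']`,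
`θ(h) ≤ 2(b'−a)⁻¹ ∫_a^{b'} θ + (1/2)(∫_a^{b'} θ)(∫_a^{b'} θ'²/θ²)`. -/
theorem pointwise_temperature_bound
    (a b' : ℝ) (hab : a < b') (θ θ' : ℝ → ℝ)
    (hderiv : ∀ s ∈ Icc a b', HasDerivWithinAt θ (θ' s) (Icc a b') s)
    (hcont : ContinuousOn θ' (Icc a b'))
    (hpos : ∀ s ∈ Icc a b', 0 < θ s) :
    ∀ h ∈ Icc a b',
      θ h ≤ 2 * (b' - a)⁻¹ * (∫ s in a..b', θ s)
        + (1 / 2) * (∫ s in a..b', θ s) * (∫ s in a..b', (θ' s) ^ 2 / (θ s) ^ 2) := by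
  intro h hh
  have hθ : ContinuousOn θ (Icc a b') := fun s hs => (hderiv s hs).continuousWithinAt
  have hsqrt' := hcont.div_two_sqrt hθ hpos
  obtain ⟨s₀, hs₀, hmin⟩ := isCompact_Icc.exists_isMinOn (nonempty_Icc.2 hab.le) hθ
  have h_min_le_avg : θ s₀ ≤ (b' - a)⁻¹ * ∫ s in a..b', θ s := by
    rw [le_inv_mul_iff₀ (sub_pos.2 hab), mul_comm]
    exact mul_sub_le_integral_of_isMinOn hab.le (hθ.intervalIntegrable_of_Icc hab.le) hmin
  have h_osc : |√(θ h) - √(θ s₀)| ≤ ∫ s in a..b', |θ' s / (2 * √(θ s))| := by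
    rw [← integral_eq_sub_of_hasDerivWithinAt_Icc
      (fun s hs => (hderiv s hs).sqrt (hpos s hs).ne') hsqrt' hs₀ hh]
    exact abs_intervalIntegral_le_integral_abs_of_mem_Icc
      (hsqrt'.intervalIntegrable_of_Icc hab.le) hs₀ hh
  calc θ h = (√(θ s₀) + (√(θ h) - √(θ s₀))) ^ 2 := by
        rw [add_sub_cancel, Real.sq_sqrt (hpos h hh).le]
    _ ≤ 2 * (θ s₀ + (∫ s in a..b', |θ' s / (2 * √(θ s))|) ^ 2) := by
        refine add_sq_le.trans ?_
        rw [Real.sq_sqrt (hpos s₀ hs₀).le]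
        gcongr 2 * (_ + ?_)
        exact sq_le_sq.2 (h_osc.trans (le_abs_self _))
    _ ≤ 2 * ((b' - a)⁻¹ * (∫ s in a..b', θ s)
          + (∫ s in a..b', θ s) * (∫ s in a..b', θ' s ^ 2 / θ s ^ 2) / 4) := by
        gcongr
        exact sq_integral_abs_deriv_sqrt_le hab hθ hcont hpos
    _ = _ := by ring
end
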